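/- Let Ŝ be the CHSH operator for the fixed observables A₀ = σx, A₁ = σz, B₀ = (σx+σz)/√2, B₁ = (σx−σz)/√2. If ρ is a 4×4 positive semidefinite matrix with trace 1 and S(ρ) = Tr(ρŜ) = 2√2 − ε for some 0 < ε < 2√2, then the entanglement fidelity satisfies F(ρ) ≥ 1 − ε/(2√2). -/

import Mathlib

open Matrix Kronecker Complex ComplexOrder

noncomputable section

/-- Pauli X matrix. -/
def sigX : Matrix (Fin 2) (Fin 2) ℂ := !![0, 1; 1, 0]

/-- Pauli Z matrix. -/
def sigZ : Matrix (Fin 2) (Fin 2) ℂ := !![1, 0; 0, -1]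

/-- Bob's observable `B₀ = (σx + σz)/√2`. -/
def Bob0 : Matrix (Fin 2) (Fin 2) ℂ := ((Real.sqrt 2 : ℂ))⁻¹ • (sigX + sigZ)

/-- Bob's observable `B₁ = (σx − σz)/√2`. -/
def Bob1 : Matrix (Fin 2) (Fin 2) ℂ := ((Real.sqrt 2 : ℂ))⁻¹ • (sigX - sigZ)

/-- The CHSH operator `Ŝ = A₀⊗B₀ + A₁⊗B₀ + A₀⊗B₁ − A₁⊗B₁` with `A₀ = σx`, `A₁ = σz`. -/
def Shat : Matrix (Fin 2 × Fin 2) (Fin 2 × Fin 2) ℂ :=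
  sigX ⊗ₖ Bob0 + sigZ ⊗ₖ Bob0 + sigX ⊗ₖ Bob1 - sigZ ⊗ₖ Bob1

/-- Bell state `|Φ⁺⟩ = (|00⟩ + |11⟩)/√2`. -/
def phiPlus : Fin 2 × Fin 2 → ℂ :=
  fun p => if p = (0, 0) ∨ p = (1, 1) then ((Real.sqrt 2 : ℂ))⁻¹ else 0

/-- Bell state `|Ψ⁻⟩ = (|01⟩ − |10⟩)/√2`. -/
def psiMinus : Fin 2 × Fin 2 → ℂ :=
  fun p => if p = (0, 1) then ((Real.sqrt 2 : ℂ))⁻¹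
    else if p = (1, 0) then -((Real.sqrt 2 : ℂ))⁻¹ else 0

/-- CHSH measure `S(ρ) = Tr(ρ Ŝ)` (a real number for Hermitian ρ). -/
def Smeas (ρ : Matrix (Fin 2 × Fin 2) (Fin 2 × Fin 2) ℂ) : ℝ :=
  ((ρ * Shat).trace).re

/-- Entanglement fidelity `F(ρ) = ⟨Φ⁺|ρ|Φ⁺⟩`. -/
def Fent (ρ : Matrix (Fin 2 × Fin 2) (Fin 2 × Fin 2) ℂ) : ℝ :=
  (star phiPlus ⬝ᵥ ρ *ᵥ phiPlus).re

end

/-!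
The CHSH operator for these observables has spectral decomposition
`Ŝ = 2√2 (|Φ⁺⟩⟨Φ⁺| − |Ψ⁻⟩⟨Ψ⁻|)`, so `S(ρ) = 2√2 (F(ρ) − ⟨Ψ⁻|ρ|Ψ⁻⟩)`. Positivity of `ρ` makes
the last term nonnegative, whence `2√2 − ε = S(ρ) ≤ 2√2 F(ρ)`.
-/

theorem Matrix.trace_mul_vecMulVec_star {n R : Type*} [Fintype n] [CommSemiring R] [StarRing R]
    (A : Matrix n n R) (v : n → R) :
    (A * vecMulVec v (star v)).trace = star v ⬝ᵥ A *ᵥ v := by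
  rw [mul_vecMulVec, trace_vecMulVec, dotProduct_comm]

theorem Shat_eq_smul_sub_vecMulVec :
    Shat = ((2 * Real.sqrt 2 : ℝ) : ℂ) •
      (vecMulVec phiPlus (star phiPlus) - vecMulVec psiMinus (star psiMinus)) := by
  have hsq : (Real.sqrt 2 : ℂ) * (Real.sqrt 2 : ℂ) = 2 := by
    exact_mod_cast Real.mul_self_sqrt zero_le_two
  have hne : (Real.sqrt 2 : ℂ) ≠ 0 := by exact_mod_cast (Real.sqrt_pos.2 two_pos).ne'
  ext ⟨i, j⟩ ⟨k, l⟩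
  fin_cases i <;> fin_cases j <;> fin_cases k <;> fin_cases l <;>
    simp [Shat, sigX, sigZ, Bob0, Bob1, phiPlus, psiMinus, vecMulVec, kroneckerMap_apply,
      Prod.ext_iff] <;>
    field_simp <;> ring_nf

theorem Smeas_eq (ρ : Matrix (Fin 2 × Fin 2) (Fin 2 × Fin 2) ℂ) :
    Smeas ρ = 2 * Real.sqrt 2 * (Fent ρ - (star psiMinus ⬝ᵥ ρ *ᵥ psiMinus).re) := by
  rw [Smeas, Fent, Shat_eq_smul_sub_vecMulVec, Matrix.mul_smul, Matrix.mul_sub, trace_smul,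
    trace_sub, trace_mul_vecMulVec_star, trace_mul_vecMulVec_star, smul_eq_mul, re_ofReal_mul,
    sub_re]

theorem Smeas_le_of_posSemidef {ρ : Matrix (Fin 2 × Fin 2) (Fin 2 × Fin 2) ℂ}
    (hρ : ρ.PosSemidef) : Smeas ρ ≤ 2 * Real.sqrt 2 * Fent ρ := by
  have hψ : 0 ≤ (star psiMinus ⬝ᵥ ρ *ᵥ psiMinus).re :=
    (Complex.le_def.mp (hρ.dotProduct_mulVec_nonneg psiMinus)).1
  rw [Smeas_eq]
  nlinarith [Real.sqrt_nonneg 2]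

theorem fidelity_lower_bound_of_near_max_chsh_general
    (ρ : Matrix (Fin 2 × Fin 2) (Fin 2 × Fin 2) ℂ)
    (hρ : ρ.PosSemidef)
    (ε : ℝ)
    (hS : Smeas ρ = 2 * Real.sqrt 2 - ε) :
    Fent ρ ≥ 1 - ε / (2 * Real.sqrt 2) := by
  have hc : 0 < 2 * Real.sqrt 2 := by positivity
  have hle := Smeas_le_of_posSemidef hρ
  rw [hS] at hle
  rw [ge_iff_le, one_sub_div hc.ne', div_le_iff₀ hc]
  linarith

/-- If the CHSH measure of ρ is `2√2 − ε` for some `0 < ε < 2√2`, then the entanglement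
fidelity satisfies `F(ρ) ≥ 1 − ε/(2√2)`. -/
theorem fidelity_lower_bound_of_near_max_chsh
    (ρ : Matrix (Fin 2 × Fin 2) (Fin 2 × Fin 2) ℂ)
    (hρ : ρ.PosSemidef) (htr : ρ.trace = 1)
    (ε : ℝ) (hε : 0 < ε) (hε' : ε < 2 * Real.sqrt 2)
    (hS : Smeas ρ = 2 * Real.sqrt 2 - ε) :
    Fent ρ ≥ 1 - ε / (2 * Real.sqrt 2) :=
  fidelity_lower_bound_of_near_max_chsh_general ρ hρ ε hS
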